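/- arXiv:2502.04934 — 3 statements merged into one kernel-verified Lean document; each statement's English description precedes it below -/
import Mathlib

section
/- For every bounded real sequence u and every positive integer k, the limit inferior of the averages (1/(kT))·∑_{t=1}^{kT} u_t as T→∞ is at most the limit inferior as δ→1⁻ of the Abel sums (1−δ)·∑_{t=1}^{∞} δ^{t−1} u_t. -/
/-!
Fix `a` below the liminf of the averages along multiples of `k`. Eventually the partial sums of
`u - a` at multiples of `k` are nonnegative, and in between they drop by at most `k` bounded terms,
so all partial sums of `u - a` are bounded below by some `B`. Abel summation (a Cauchy product
with the geometric series) writes the Abel sum of `u - a` as `(1 - δ)²` times the discounted sum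
of its partial sums, hence it is at least `(1 - δ) B`, which tends to `0` as `δ → 1⁻`.
-/

open Filter

/-- `u` is a bounded sequence. -/
def Bdd (u : ℕ → ℝ) : Prop := ∃ C : ℝ, ∀ t, |u t| ≤ C

/-- Cesàro average of the first `T` terms. -/
noncomputable def avg (u : ℕ → ℝ) (T : ℕ) : ℝ := (∑ t ∈ Finset.range T, u t) / T

/-- Abel (discounted utilitarian) sum. -/
noncomputable def abel (u : ℕ → ℝ) (δ : ℝ) : ℝ := (1 - δ) * ∑' t : ℕ, δ ^ t * u t

open Finset

lemma Bdd.sub_const {u : ℕ → ℝ} (hu : Bdd u) (a : ℝ) : Bdd fun t => u t - a := by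
  obtain ⟨C, hC⟩ := hu
  exact ⟨C + |a|, fun t => (abs_sub _ _).trans (by linarith [hC t])⟩

lemma Bdd.avg {u : ℕ → ℝ} (hu : Bdd u) : Bdd (avg u) := by
  obtain ⟨C, hC⟩ := hu
  refine ⟨C, fun T => ?_⟩
  rcases T.eq_zero_or_pos with rfl | hT
  · simpa [_root_.avg] using (abs_nonneg _).trans (hC 0)
  · have hT' : (0 : ℝ) < T := by exact_mod_cast hT
    rw [_root_.avg, abs_div, abs_of_pos hT', div_le_iff₀ hT']
    calc |∑ t ∈ range T, u t| ≤ ∑ t ∈ range T, |u t| := abs_sum_le_sum_abs _ _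
      _ ≤ ∑ _t ∈ range T, C := sum_le_sum fun t _ => hC t
      _ = C * T := by simp [mul_comm]

lemma Bdd.summable_norm_pow_mul {u : ℕ → ℝ} (hu : Bdd u) {δ : ℝ} (h0 : 0 ≤ δ) (h1 : δ < 1) :
    Summable fun t => ‖δ ^ t * u t‖ := by
  obtain ⟨C, hC⟩ := hu
  refine .of_nonneg_of_le (fun t => norm_nonneg _) (fun t => ?_)
    ((summable_geometric_of_lt_one h0 h1).mul_right C)
  rw [norm_mul, Real.norm_of_nonneg (pow_nonneg h0 t), Real.norm_eq_abs]
  exact mul_le_mul_of_nonneg_left (hC t) (pow_nonneg h0 t)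

lemma sum_range_sub_nonneg_of_le_avg {u : ℕ → ℝ} {a : ℝ} {T : ℕ} (h : a ≤ avg u T) :
    0 ≤ ∑ t ∈ range T, (u t - a) := by
  rcases T.eq_zero_or_pos with rfl | hT
  · simp
  · have hT' : (0 : ℝ) < T := by exact_mod_cast hT
    rw [avg, le_div_iff₀ hT'] at h
    rw [sum_sub_distrib, sum_const, card_range, nsmul_eq_mul]
    linarith

lemma sum_range_add_nsmul_le {v : ℕ → ℝ} {c : ℝ} (hc : ∀ t, c ≤ v t) {m n : ℕ} (hmn : m ≤ n) :
    ∑ t ∈ range m, v t + (n - m) • c ≤ ∑ t ∈ range n, v t := by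
  rw [← sum_range_add_sum_Ico v hmn, ← Nat.card_Ico]
  exact add_le_add_right (card_nsmul_le_sum _ _ _ fun t _ => hc t) _

lemma bddBelow_range_sum_range_of_eventually_nonneg {v : ℕ → ℝ} (hv : Bdd v) {k : ℕ} (hk : 0 < k)
    (h : ∀ᶠ T in atTop, 0 ≤ ∑ t ∈ range (k * T), v t) :
    BddBelow (Set.range fun n => ∑ t ∈ range n, v t) := by
  obtain ⟨C, hC⟩ := hv
  obtain ⟨N, hN⟩ := eventually_atTop.1 h
  have hC0 : 0 ≤ C := (abs_nonneg _).trans (hC 0)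
  refine (isBoundedUnder_of_eventually_ge (a := -(k * C)) ?_).bddBelow_range
  filter_upwards [eventually_ge_atTop (k * N)] with n hn
  have hdrop : n - k * (n / k) ≤ k := by
    have := Nat.div_add_mod n k
    have := Nat.mod_lt n hk
    omega
  have hstep := sum_range_add_nsmul_le (fun t => (abs_le.1 (hC t)).1) (Nat.mul_div_le n k)
  have hstart := hN (n / k) ((Nat.le_div_iff_mul_le hk).2 (by linarith))
  rw [nsmul_eq_mul] at hstep
  have : ((n - k * (n / k) : ℕ) : ℝ) * C ≤ k * C := by gcongr
  linarith

section Abel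

variable {u : ℕ → ℝ} {δ : ℝ}

lemma abel_sub_const (hu : Bdd u) (h0 : 0 ≤ δ) (h1 : δ < 1) (a : ℝ) :
    abel (fun t => u t - a) δ = abel u δ - a := by
  have hgeom := summable_geometric_of_lt_one h0 h1
  simp only [abel, mul_sub]
  rw [Summable.tsum_sub (hu.summable_norm_pow_mul h0 h1).of_norm (hgeom.mul_right a),
    tsum_mul_right, tsum_geometric_of_lt_one h0 h1]
  field_simp [(sub_pos.2 h1).ne']

lemma abel_le_of_forall_le (hu : Bdd u) (h0 : 0 ≤ δ) (h1 : δ < 1) {c : ℝ} (h : ∀ t, u t ≤ c) :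
    abel u δ ≤ c := by
  have hnonpos : abel (fun t => u t - c) δ ≤ 0 :=
    mul_nonpos_of_nonneg_of_nonpos (sub_nonneg.2 h1.le) <| tsum_nonpos fun t =>
      mul_nonpos_of_nonneg_of_nonpos (pow_nonneg h0 t) (sub_nonpos.2 (h t))
  linarith [abel_sub_const hu h0 h1 c]

/-- Abel summation: the Cauchy product of `∑ δ^t u t` with `∑ δ^n = (1 - δ)⁻¹`. -/
lemma hasSum_pow_mul_sum_range (hu : Bdd u) (h0 : 0 ≤ δ) (h1 : δ < 1) :
    HasSum (fun n => δ ^ n * ∑ t ∈ range (n + 1), u t) ((∑' t, δ ^ t * u t) / (1 - δ)) := by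
  have hgeom : Summable fun n => ‖δ ^ n‖ := by
    simpa [Real.norm_of_nonneg, h0] using summable_geometric_of_lt_one h0 h1
  have := hasSum_sum_range_mul_of_summable_norm (hu.summable_norm_pow_mul h0 h1) hgeom
  rw [tsum_geometric_of_lt_one h0 h1, ← div_eq_mul_inv] at this
  have hterm : ∀ n, ∑ t ∈ range (n + 1), δ ^ t * u t * δ ^ (n - t) =
      δ ^ n * ∑ t ∈ range (n + 1), u t := fun n => by
    rw [mul_sum]
    refine sum_congr rfl fun t ht => ?_
    rw [← pow_mul_pow_sub δ (Nat.lt_succ_iff.1 (mem_range.1 ht))]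
    ring
  simpa only [hterm] using this

lemma le_abel_of_forall_le_sum_range (hu : Bdd u) (h0 : 0 ≤ δ) (h1 : δ < 1) {B : ℝ}
    (hB : ∀ n, B ≤ ∑ t ∈ range (n + 1), u t) : (1 - δ) * B ≤ abel u δ := by
  have hpos : 0 < 1 - δ := sub_pos.2 h1
  have hle : B / (1 - δ) ≤ (∑' t, δ ^ t * u t) / (1 - δ) := by
    refine hasSum_le (fun n => mul_le_mul_of_nonneg_left (hB n) (pow_nonneg h0 n)) ?_
      (hasSum_pow_mul_sum_range hu h0 h1)
    simpa [div_eq_inv_mul] using (hasSum_geometric_of_lt_one h0 h1).mul_right B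
  rw [div_le_div_iff_of_pos_right hpos] at hle
  exact mul_le_mul_of_nonneg_left hle hpos.le

end Abel

theorem stmt_0 (u : ℕ → ℝ) (hu : Bdd u) (k : ℕ) (hk : 0 < k) :
    liminf (fun T : ℕ => avg u (k * T)) atTop ≤
      liminf (fun δ : ℝ => abel u δ) (nhdsWithin 1 (Set.Iio 1)) := by
  refine le_of_forall_lt_imp_le_of_dense fun a ha => ?_
  obtain ⟨A, hA⟩ := hu.avg
  have ⟨C, hC⟩ := hu
  have hmult : ∀ᶠ T in atTop, 0 ≤ ∑ t ∈ range (k * T), (u t - a) :=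
    (eventually_lt_of_lt_liminf ha (isBoundedUnder_of ⟨-A, fun T => (abs_le.1 (hA _)).1⟩)).mono
      fun T hT => sum_range_sub_nonneg_of_le_avg hT.le
  obtain ⟨B, hB⟩ := bddBelow_range_sum_range_of_eventually_nonneg (hu.sub_const a) hk hmult
  have hnear : ∀ᶠ δ in nhdsWithin 1 (Set.Iio 1), a + (1 - δ) * B ≤ abel u δ ∧ abel u δ ≤ C := by
    filter_upwards [Ioo_mem_nhdsLT zero_lt_one] with δ ⟨h0, h1⟩
    have := le_abel_of_forall_le_sum_range (hu.sub_const a) h0.le h1 fun n => hB ⟨n + 1, rfl⟩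
    rw [abel_sub_const hu h0.le h1] at this
    exact ⟨by linarith, abel_le_of_forall_le hu h0.le h1 fun t => (abs_le.1 (hC t)).2⟩
  have hlim : Tendsto (fun δ : ℝ => a + (1 - δ) * B) (nhdsWithin 1 (Set.Iio 1)) (nhds a) :=
    tendsto_nhdsWithin_of_tendsto_nhds <|
      (by fun_prop : Continuous fun δ : ℝ => a + (1 - δ) * B).tendsto' 1 a (by simp)
  calc a = liminf (fun δ : ℝ => a + (1 - δ) * B) (nhdsWithin 1 (Set.Iio 1)) := hlim.liminf_eq.symm
    _ ≤ _ := liminf_le_liminf (hnear.mono fun _ h => h.1) hlim.isBoundedUnder_ge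
        (isCoboundedUnder_ge_of_eventually_le _ (hnear.mono fun _ h => h.2))
end

section
/- Let ≿ be a reflexive transitive complete binary relation on a vector space of sequences 𝒟 satisfying finite anonymity (u^π ∼ u for every finitely supported permutation π) and one-generation additivity (u ≿ v implies u + α·1_{t} ≿ v + α·1_{t} for every coordinate t and real α, where 1_{t} is the indicator of coordinate t). Then for all u, v ∈ 𝒟: if there exist indices s, t with u_s + u_t = v_s + v_t and u_i = v_i for all i ∉ {s,t}, then u ∼ v. -/
/-- A finite permutation of ℕ: a bijection fixing all but finitely many points. -/
def FinitePerm (π : Equiv.Perm ℕ) : Prop := {t : ℕ | π t ≠ t}.Finite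

theorem stmt_6 (D : Set (ℕ → ℝ)) (R : (ℕ → ℝ) → (ℕ → ℝ) → Prop)
    -- D is closed under the operations involved
    (hDadd : ∀ u ∈ D, ∀ (t : ℕ) (α : ℝ), (u + Pi.single t α) ∈ D)
    (hDperm : ∀ u ∈ D, ∀ π : Equiv.Perm ℕ, FinitePerm π → (fun s => u (π s)) ∈ D)
    -- ≿ is a complete (total) preorder on D
    (hrefl : ∀ u ∈ D, R u u)
    (htrans : ∀ u ∈ D, ∀ v ∈ D, ∀ w ∈ D, R u v → R v w → R u w)
    (htotal : ∀ u ∈ D, ∀ v ∈ D, R u v ∨ R v u)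
    -- finite anonymity
    (hanon : ∀ u ∈ D, ∀ π : Equiv.Perm ℕ, FinitePerm π →
      (R u (fun s => u (π s)) ∧ R (fun s => u (π s)) u))
    -- one-generation additivity
    (hadd : ∀ u ∈ D, ∀ v ∈ D, ∀ (t : ℕ) (α : ℝ),
      R u v → R (u + Pi.single t α) (v + Pi.single t α)) :
    ∀ u ∈ D, ∀ v ∈ D, ∀ s t : ℕ,
      u s + u t = v s + v t → (∀ i, i ≠ s → i ≠ t → u i = v i) →
      R u v ∧ R v u := by
  intro u hu v hv s t hsum heq
  by_cases hst : s = t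
  · -- degenerate case: u = v
    subst hst
    have huv : u = v := by
      funext i
      by_cases his : i = s
      · subst his; linarith
      · exact heq i his his
    subst huv
    exact ⟨hrefl u hu, hrefl u hu⟩
  · set c0 : ℝ := u t - u s with hc0
    set α : ℝ := v s - u s with hαdef
    have hvt : v t = u t - α := by
      rw [hαdef]; linarith
    set X : ℝ → (ℕ → ℝ) := fun c => u + Pi.single s c + Pi.single t (-c) with hX
    have hXD : ∀ c, X c ∈ D := fun c => hDadd _ (hDadd u hu s c) t (-c)
    have hX0 : X 0 = u := by
      funext i; simp [hX]
    have hXα : X α = v := by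
      funext i
      by_cases his : i = s
      · subst his
        simp [hX, Pi.single_eq_of_ne hst, hαdef]
      · by_cases hit : i = t
        · subst hit
          simp [hX, Pi.single_eq_of_ne (Ne.symm hst), hvt]
          ring
        · simp [hX, Pi.single_eq_of_ne his, Pi.single_eq_of_ne hit, heq i his hit]
    set π : Equiv.Perm ℕ := Equiv.swap s t with hπ
    have hπfin : FinitePerm π := by
      apply Set.Finite.subset ((Set.finite_singleton t).insert s)
      intro x hx
      by_contra h
      simp only [Set.mem_insert_iff, Set.mem_singleton_iff] at h
      push_neg at h
      exact hx (Equiv.swap_apply_of_ne_of_ne h.1 h.2)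
    have hXswap : ∀ c, (fun i => X c (π i)) = X (c0 - c) := by
      intro c
      funext i
      by_cases his : i = s
      · subst his
        simp [hX, hπ, Equiv.swap_apply_left, Pi.single_eq_of_ne hst,
          Pi.single_eq_of_ne (Ne.symm hst), hc0]
        ring
      · by_cases hit : i = t
        · subst hit
          simp [hX, hπ, Equiv.swap_apply_right, Pi.single_eq_of_ne hst,
            Pi.single_eq_of_ne (Ne.symm hst), hc0]
          ring
        · rw [hπ]
          rw [Equiv.swap_apply_of_ne_of_ne his hit]
          simp [hX, Pi.single_eq_of_ne his, Pi.single_eq_of_ne hit]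
    have hanonX : ∀ c, R (X c) (X (c0 - c)) ∧ R (X (c0 - c)) (X c) := by
      intro c
      have h := hanon (X c) (hXD c) π hπfin
      rwa [hXswap c] at h
    have hXadd : ∀ a d : ℝ, X a + Pi.single s d + Pi.single t (-d) = X (a + d) := by
      intro a d
      funext i
      simp only [hX, Pi.add_apply, Pi.single_apply]
      split_ifs with h1 h2 <;> ring
    have hshift : ∀ a b d : ℝ, R (X a) (X b) → R (X (a + d)) (X (b + d)) := by
      intro a b d h
      have h1 := hadd _ (hXD a) _ (hXD b) s d h
      have h2 := hadd _ (hDadd _ (hXD a) s d) _ (hDadd _ (hXD b) s d) t (-d) h1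
      rwa [hXadd a d, hXadd b d] at h2
    have hsym : ∀ a b : ℝ, R (X a) (X b) → R (X b) (X a) := by
      intro a b h
      have h' := hshift a b (c0 - a - b) h
      have e1 : a + (c0 - a - b) = c0 - b := by ring
      have e2 : b + (c0 - a - b) = c0 - a := by ring
      rw [e1, e2] at h'
      have t1 : R (X b) (X (c0 - a)) :=
        htrans _ (hXD b) _ (hXD (c0 - b)) _ (hXD (c0 - a)) (hanonX b).1 h'
      exact htrans _ (hXD b) _ (hXD (c0 - a)) _ (hXD a) t1 (hanonX a).2
    have hu' : u = X 0 := hX0.symm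
    have hv' : v = X α := hXα.symm
    rw [hu', hv']
    rcases htotal (X 0) (hXD 0) (X α) (hXD α) with h | h
    · exact ⟨h, hsym 0 α h⟩
    · exact ⟨hsym α 0 h, h⟩
end

section
/- The catching-up criterion implies the fixed-step catching-up criterion, but not conversely: for all real sequences u, v, if there exists T* such that ∑_{t=1}^{T} u_t ≥ ∑_{t=1}^{T} v_t for all T ≥ T*, then there exists k such that ∑_{t=1}^{kT} u_t ≥ ∑_{t=1}^{kT} v_t for all T ≥ 1; moreover, for u = (1,0,1,0,…) and v = (0,1,0,1,…) one has u ≻^C v (strict catching-up dominance) while u ∼^{fix-C} v (fixed-step indifference, witnessed by k = 2). -/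
/-! If the partial sums of `u` dominate from `T0` on, the step `k = T0 + 1` only ever looks at
horizons `k * T ≥ T0`. For the alternating sequences, the partial sums differ by `1` at odd horizons
and agree at even ones, so `u` catches up with `v` strictly, yet the two are indifferent for step `2`. -/

/-- partial sum of the first `T` terms -/
noncomputable def S (w : ℕ → ℝ) (T : ℕ) : ℝ := ∑ t ∈ Finset.range T, w t

/-- catching-up criterion -/
def CatchUp (u v : ℕ → ℝ) : Prop := ∃ T0 : ℕ, ∀ T ≥ T0, S v T ≤ S u T

/-- fixed-step catching-up criterion -/
def FixCatchUp (u v : ℕ → ℝ) : Prop :=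
  ∃ k : ℕ, 0 < k ∧ ∀ T : ℕ, 1 ≤ T → S v (k * T) ≤ S u (k * T)

lemma S_succ (w : ℕ → ℝ) (T : ℕ) : S w (T + 1) = S w T + w T :=
  Finset.sum_range_succ w T

theorem CatchUp.fixCatchUp {u v : ℕ → ℝ} (h : CatchUp u v) : FixCatchUp u v := by
  obtain ⟨T0, hT0⟩ := h
  refine ⟨T0 + 1, T0.succ_pos, fun T hT => hT0 _ ?_⟩
  calc T0 ≤ (T0 + 1) * 1 := by omega
    _ ≤ (T0 + 1) * T := Nat.mul_le_mul_left _ hT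

def evenIndicator : ℕ → ℝ := fun t => if Even t then 1 else 0

def oddIndicator : ℕ → ℝ := fun t => if Even t then 0 else 1

lemma S_evenIndicator (T : ℕ) :
    S evenIndicator T = S oddIndicator T + if Even T then 0 else 1 := by
  induction T with
  | zero => simp [S]
  | succ n ih =>
    rw [S_succ, S_succ, ih]
    by_cases h : Even n <;> simp [evenIndicator, oddIndicator, h, Nat.even_add_one]

lemma S_evenIndicator_two_mul (T : ℕ) :
    S evenIndicator (2 * T) = S oddIndicator (2 * T) := by
  simp [S_evenIndicator]

theorem catchUp_evenIndicator_oddIndicator : CatchUp evenIndicator oddIndicator :=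
  ⟨0, fun T _ => by rw [S_evenIndicator]; split_ifs <;> norm_num⟩

theorem not_catchUp_oddIndicator_evenIndicator : ¬ CatchUp oddIndicator evenIndicator := by
  rintro ⟨T0, hT0⟩
  have hodd : ¬ Even (2 * T0 + 1) := by simp
  have := hT0 (2 * T0 + 1) (by omega)
  rw [S_evenIndicator, if_neg hodd] at this
  linarith

theorem stmt_17 :
    (∀ u v : ℕ → ℝ, CatchUp u v → FixCatchUp u v) ∧
    (CatchUp (fun t => if Even t then (1 : ℝ) else 0) (fun t => if Even t then (0 : ℝ) else 1) ∧
      ¬ CatchUp (fun t => if Even t then (0 : ℝ) else 1) (fun t => if Even t then (1 : ℝ) else 0)) ∧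
    ((∀ T : ℕ, 1 ≤ T →
        S (fun t => if Even t then (0 : ℝ) else 1) (2 * T) ≤
          S (fun t => if Even t then (1 : ℝ) else 0) (2 * T)) ∧
      (∀ T : ℕ, 1 ≤ T →
        S (fun t => if Even t then (1 : ℝ) else 0) (2 * T) ≤
          S (fun t => if Even t then (0 : ℝ) else 1) (2 * T))) :=
  ⟨fun _ _ => CatchUp.fixCatchUp,
    ⟨catchUp_evenIndicator_oddIndicator, not_catchUp_oddIndicator_evenIndicator⟩,
    fun T _ => (S_evenIndicator_two_mul T).ge, fun T _ => (S_evenIndicator_two_mul T).le⟩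
end
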